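/- In 𝒜_{r,s}(n), for any increasing index sequences 1 ≤ i_1 < ⋯ < i_t ≤ n and 1 ≤ j_1 < ⋯ < j_t ≤ n, the quantum row-minor equals the quantum column-minor: rdet_r(A^{i_1…i_t}_{j_1…j_t}) = cdet_{s⁻¹}(A^{i_1…i_t}_{j_1…j_t}). -/

import Mathlib

open scoped TensorProduct Classical

noncomputable section Prelude

variable {F : Type*} [Field F] {R : Type*} [Ring R] [Algebra F R]

/-- The number of inversions `l(σ)` of a permutation `σ ∈ S_n`. -/
def inversions {n : ℕ} (σ : Equiv.Perm (Fin n)) : ℕ :=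
  (Finset.univ.filter fun p : Fin n × Fin n => p.1 < p.2 ∧ σ p.2 < σ p.1).card

/-- The quantum row determinant `rdet_r(A) = Σ_σ (-r)^{l(σ)} a_{1σ(1)} ⋯ a_{nσ(n)}`. -/
def rdet (r : F) {n : ℕ} (a : Fin n → Fin n → R) : R :=
  ∑ σ : Equiv.Perm (Fin n), (-r) ^ inversions σ • (List.ofFn fun i => a i (σ i)).prod

/-- The quantum column determinant `cdet_{s⁻¹}(A) = Σ_σ (-s)^{-l(σ)} a_{σ(1)1} ⋯ a_{σ(n)n}`. -/
def cdet (s : F) {n : ℕ} (a : Fin n → Fin n → R) : R :=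
  ∑ σ : Equiv.Perm (Fin n),
    ((-s) ^ (-(inversions σ : ℤ))) • (List.ofFn fun i => a (σ i) i).prod

/-- The quantum (column) permanent `per_q(A) = Σ_σ q^{l(σ)} a_{σ(1)1} ⋯ a_{σ(n)n}`. -/
def qper (q : F) {n : ℕ} (a : Fin n → Fin n → R) : R :=
  ∑ σ : Equiv.Perm (Fin n), q ^ inversions σ • (List.ofFn fun i => a (σ i) i).prod

/-- The defining relations of the two-parameter quantum semigroup `𝒜_{r,s}(n)`:
`a` plays the role of the matrix of generators `(a_{ij})`. -/
def IsQSemigroup (r s : F) {n : ℕ} (a : Fin n → Fin n → R) : Prop :=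
  (∀ i k l : Fin n, k < l → a i k * a i l = r • (a i l * a i k)) ∧
  (∀ i j k : Fin n, i < j → a i k * a j k = s⁻¹ • (a j k * a i k)) ∧
  (∀ i j k l : Fin n, i < j → k < l → r • (a i l * a j k) = s⁻¹ • (a j k * a i l)) ∧
  (∀ i j k l : Fin n, i < j → k < l →
    a i k * a j l - a j l * a i k = (r - s) • (a i l * a j k))

/-- The quantum integer `[m]_v = 1 + v + ⋯ + v^{m-1}`. -/
def qint (v : F) (m : ℕ) : F := ∑ k ∈ Finset.range m, v ^ k

/-- The quantum factorial `[n]_v! = [n]_v [n-1]_v ⋯ [1]_v`. -/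
def qfac (v : F) (n : ℕ) : F := ∏ m ∈ Finset.range n, qint v (m + 1)

/-- The position `2i-1` (1-based), i.e. `2i` (0-based), in `Fin (2n)`. -/
def pL {n : ℕ} (i : Fin n) : Fin (2 * n) := ⟨2 * i.1, by have := i.2; omega⟩

/-- The position `2i` (1-based), i.e. `2i+1` (0-based), in `Fin (2n)`. -/
def pR {n : ℕ} (i : Fin n) : Fin (2 * n) := ⟨2 * i.1 + 1, by have := i.2; omega⟩

/-- The product `b_{σ(1)σ(2)} b_{σ(3)σ(4)} ⋯ b_{σ(2n-1)σ(2n)}`. -/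
def pairProd {n : ℕ} (b : Fin (2 * n) → Fin (2 * n) → R) (σ : Equiv.Perm (Fin (2 * n))) : R :=
  (List.ofFn fun i : Fin n => b (σ (pL i)) (σ (pR i))).prod

/-- Membership in `Π′`: `σ(2i-1) < σ(2i)` for all `i = 1, …, n`. -/
def inPi' {n : ℕ} (σ : Equiv.Perm (Fin (2 * n))) : Prop := ∀ i : Fin n, σ (pL i) < σ (pR i)

/-- Membership in `Π`: additionally `σ(1) < σ(3) < ⋯ < σ(2n-1)`. -/
def inPi {n : ℕ} (σ : Equiv.Perm (Fin (2 * n))) : Prop :=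
  inPi' σ ∧ ∀ i j : Fin n, i < j → σ (pL i) < σ (pL j)

/-- `Σ_{σ∈Π′} (-r)^{l(σ)} b_{σ(1)σ(2)} ⋯ b_{σ(2n-1)σ(2n)}`. -/
def pfSum (r : F) {n : ℕ} (b : Fin (2 * n) → Fin (2 * n) → R) : R :=
  ∑ σ : Equiv.Perm (Fin (2 * n)), if inPi' σ then (-r) ^ inversions σ • pairProd b σ else 0

/-- The quantum Pfaffian `Pf_r(B)`. -/
def Pf (r : F) {n : ℕ} (b : Fin (2 * n) → Fin (2 * n) → R) : R :=
  (qfac (r ^ 4) n)⁻¹ • pfSum r b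

/-- `Σ_{σ∈Π′} (-s)^{-l(σ)} b_{σ(1)σ(2)} ⋯ b_{σ(2n-1)σ(2n)}`. -/
def pfSumInv (s : F) {n : ℕ} (b : Fin (2 * n) → Fin (2 * n) → R) : R :=
  ∑ σ : Equiv.Perm (Fin (2 * n)),
    if inPi' σ then ((-s) ^ (-(inversions σ : ℤ))) • pairProd b σ else 0

/-- The quantum Pfaffian with parameter `s⁻¹`, `Pf_{s⁻¹}(B)`. -/
def PfInv (s : F) {n : ℕ} (b : Fin (2 * n) → Fin (2 * n) → R) : R :=
  (qfac (s⁻¹ ^ 4) n)⁻¹ • pfSumInv s b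

/-- `Σ_{σ∈Π′} q^{l(σ)} b_{σ(1)σ(2)} ⋯ b_{σ(2n-1)σ(2n)}`. -/
def hfSum (q : F) {n : ℕ} (b : Fin (2 * n) → Fin (2 * n) → R) : R :=
  ∑ σ : Equiv.Perm (Fin (2 * n)), if inPi' σ then q ^ inversions σ • pairProd b σ else 0

/-- The quantum Hafnian `Hf_q(B)`. -/
def Hf (q : F) {n : ℕ} (b : Fin (2 * n) → Fin (2 * n) → R) : R :=
  (qfac (q ^ 4) n)⁻¹ • hfSum q b

/-- The `q`-Maya (`q`-Plücker) relations. -/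
def MayaRels (q : F) {n : ℕ} (b : Fin (2 * n) → Fin (2 * n) → R) : Prop :=
  ∀ i j k l : Fin (2 * n), i < j → j < k → k < l →
    b i j * b k l - q • (b i k * b j l) + q ^ 2 • (b i l * b j k) =
      b k l * b i j - q⁻¹ • (b j l * b i k) + q⁻¹ ^ 2 • (b j k * b i l)

/-- The `(−q)`-Maya relations. -/
def NegMayaRels (q : F) {n : ℕ} (b : Fin (2 * n) → Fin (2 * n) → R) : Prop :=
  ∀ i j k l : Fin (2 * n), i < j → j < k → k < l →
    b i j * b k l + q • (b i k * b j l) + q ^ 2 • (b i l * b j k) =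
      b k l * b i j + q⁻¹ • (b j l * b i k) + q⁻¹ ^ 2 • (b j k * b i l)

end Prelude


/-! The third relation of `𝒜_{r,s}(n)` says `a_{il} a_{jk} = (rs)⁻¹ a_{jk} a_{il}` for `i < j`,
`k < l`. In the term of `rdet_r` indexed by `σ`, two adjacent factors whose columns are out of
order have exactly this shape, so bubble-sorting the factors into column order costs one factor
`(rs)⁻¹` per inversion of `σ` and yields the term of `cdet_{s⁻¹}` indexed by `σ⁻¹`. As
`(-r)^{l(σ)} (rs)^{-l(σ)} = (-s)^{-l(σ)}` and `l(σ⁻¹) = l(σ)`, the sums agree term by term. -/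

open Equiv Finset

section Inversions

variable {t : ℕ}

lemma inversions_one : inversions (1 : Perm (Fin t)) = 0 := by
  rw [inversions, card_eq_zero, filter_eq_empty_iff]
  exact fun _ _ h => lt_asymm h.1 h.2

lemma inversions_inv (σ : Perm (Fin t)) : inversions σ⁻¹ = inversions σ := by
  apply card_bij' (fun p _ => (σ⁻¹ p.2, σ⁻¹ p.1)) (fun p _ => (σ p.2, σ p.1)) <;>
    simp +contextual

lemma Equiv.Perm.eq_one_of_strictMono {σ : Perm (Fin t)} (hσ : StrictMono σ) : σ = 1 := by
  ext i
  exact congrArg Fin.val <| DFunLike.congr_fun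
    (Subsingleton.elim (hσ.orderIsoOfSurjective σ σ.surjective) (OrderIso.refl _)) i

lemma Equiv.Perm.exists_succ_lt_castSucc {σ : Perm (Fin (t + 1))} (hσ : ¬StrictMono σ) :
    ∃ i : Fin t, σ i.succ < σ i.castSucc := by
  contrapose! hσ
  exact Fin.strictMono_iff_lt_succ.2 fun i =>
    (hσ i).lt_of_ne (σ.injective.ne Fin.castSucc_lt_succ.ne)

lemma swap_castSucc_succ_lt_swap_iff {i : Fin t} {p q : Fin (t + 1)}
    (hqp : (p, q) ≠ (i.succ, i.castSucc)) :
    swap i.castSucc i.succ p < swap i.castSucc i.succ q ↔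
      (p, q) ≠ (i.castSucc, i.succ) ∧ p < q := by
  rw [swap_apply_def, swap_apply_def]
  split_ifs <;> simp only [ne_eq, Prod.mk.injEq, Fin.ext_iff, Fin.lt_def, Fin.val_castSucc,
    Fin.val_succ] at * <;> omega

lemma inversions_mul_swap_add_one {σ : Perm (Fin (t + 1))} {i : Fin t}
    (hi : σ i.succ < σ i.castSucc) :
    inversions (σ * swap i.castSucc i.succ) + 1 = inversions σ := by
  set w := swap i.castSucc i.succ
  have hset : ({p | p.1 < p.2 ∧ (σ * w) p.2 < (σ * w) p.1} :
        Finset (Fin (t + 1) × Fin (t + 1))).map (w.prodCongr w).toEmbedding =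
      ({p | p.1 < p.2 ∧ σ p.2 < σ p.1} : Finset _).erase (i.castSucc, i.succ) := by
    ext ⟨p, q⟩
    rw [mem_map_equiv, mem_filter, mem_erase, mem_filter]
    simp only [mem_univ, true_and, prodCongr_symm, prodCongr_apply, Prod.map, w, symm_swap,
      Perm.mul_apply, swap_apply_self]
    by_cases hqp : σ q < σ p
    · have hne : (p, q) ≠ (i.succ, i.castSucc) := by
        rintro ⟨⟨⟩⟩
        exact lt_asymm hi hqp
      simp only [hqp, and_true, swap_castSucc_succ_lt_swap_iff hne]
    · simp only [hqp, and_false]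
  rw [inversions, inversions, ← card_map (w.prodCongr w).toEmbedding, hset, card_erase_add_one]
  simp only [mem_filter, mem_univ, true_and]
  exact ⟨Fin.castSucc_lt_succ, hi⟩

end Inversions

section SwapProducts

variable {K R : Type*} [CommSemiring K] [Semiring R] [Algebra K R]

lemma prod_ofFn_eq_smul_prod_ofFn_comp_swap {t : ℕ} (c : K) (f : Fin (t + 1) → R) (i : Fin t)
    (hf : f i.castSucc * f i.succ = c • (f i.succ * f i.castSucc)) :
    (List.ofFn f).prod = c • (List.ofFn (f ∘ swap i.castSucc i.succ)).prod := by
  induction t with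
  | zero => exact i.elim0
  | succ t ih =>
    rw [List.ofFn_succ, List.ofFn_succ (f := f ∘ _), List.prod_cons, List.prod_cons]
    induction i using Fin.cases with
    | zero =>
      have hfix : ∀ k : Fin t, swap (0 : Fin (t + 2)) (Fin.succ 0) k.succ.succ = k.succ.succ :=
        fun k => swap_apply_of_ne_of_ne (Fin.succ_ne_zero _)
          ((Fin.succ_injective _).ne (Fin.succ_ne_zero k))
      simp only [List.ofFn_succ, List.prod_cons, Function.comp_apply, Fin.castSucc_zero,
        swap_apply_left, swap_apply_right, hfix]
      rw [Fin.castSucc_zero] at hf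
      rw [← mul_assoc, ← mul_assoc, hf, smul_mul_assoc]
    | succ j =>
      have h0 : swap j.succ.castSucc j.succ.succ 0 = 0 :=
        swap_apply_of_ne_of_ne (Fin.castSucc_ne_zero_iff.2 (Fin.succ_ne_zero _)).symm
          (Fin.succ_ne_zero _).symm
      have hsucc : ∀ k,
          swap j.succ.castSucc j.succ.succ k.succ = (swap j.castSucc j.succ k).succ :=
        fun k => by rw [Fin.castSucc_succ, (Fin.succ_injective _).swap_apply]
      have htail := ih (fun k => f k.succ) j (by simpa only [Fin.castSucc_succ] using hf)
      simp only [Function.comp_apply, h0, hsucc] at htail ⊢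
      rw [htail, mul_smul_comm]
      rfl

theorem prod_ofFn_eq_pow_inversions_smul {t : ℕ} (c : K) (σ : Perm (Fin t)) (y : Fin t → R)
    (hy : ∀ p q, p < q → σ q < σ p → y p * y q = c • (y q * y p)) :
    (List.ofFn y).prod = c ^ inversions σ • (List.ofFn fun p => y (σ⁻¹ p)).prod := by
  induction hm : inversions σ using Nat.strong_induction_on generalizing σ y with
  | _ m ih =>
  by_cases hσ : StrictMono σ
  · obtain rfl := Perm.eq_one_of_strictMono hσ
    rw [← hm, inversions_one, pow_zero, one_smul, inv_one]
    rfl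
  cases t with
  | zero => exact absurd (fun a => a.elim0) hσ
  | succ t =>
  obtain ⟨i, hi⟩ := Perm.exists_succ_lt_castSucc hσ
  have hσw := inversions_mul_swap_add_one hi
  set w := swap i.castSucc i.succ
  have hyw : ∀ p q, p < q → (σ * w) q < (σ * w) p →
      (y ∘ w) p * (y ∘ w) q = c • ((y ∘ w) q * (y ∘ w) p) := by
    intro p q hpq hσpq
    have hqp : (p, q) ≠ (i.succ, i.castSucc) := by
      rintro ⟨⟨⟩⟩
      exact lt_asymm hpq Fin.castSucc_lt_succ
    have hne : (p, q) ≠ (i.castSucc, i.succ) := by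
      rintro ⟨⟨⟩⟩
      simp only [Perm.mul_apply, w, swap_apply_left, swap_apply_right] at hσpq
      exact lt_asymm hi hσpq
    exact hy _ _ ((swap_castSucc_succ_lt_swap_iff hqp).2 ⟨hne, hpq⟩) hσpq
  rw [prod_ofFn_eq_smul_prod_ofFn_comp_swap c y i (hy _ _ Fin.castSucc_lt_succ hi),
    ih _ (by omega) (σ * w) (y ∘ w) hyw rfl, smul_smul, ← pow_succ', hσw, hm]
  congr 3
  ext k
  simp only [Function.comp_apply, mul_inv_rev, Perm.mul_apply, w, swap_inv, swap_apply_self]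

end SwapProducts

lemma IsQSemigroup.mul_eq_smul_mul_of_lt {F R : Type*} [Field F] [Ring R] [Algebra F R]
    {r s : F} (hr : r ≠ 0) {n : ℕ} {a : Fin n → Fin n → R} (ha : IsQSemigroup r s a)
    {i j k l : Fin n} (hij : i < j) (hkl : k < l) :
    a i l * a j k = (r * s)⁻¹ • (a j k * a i l) := by
  have h := congrArg (r⁻¹ • ·) (ha.2.2.1 i j k l hij hkl)
  simpa only [smul_smul, inv_mul_cancel₀ hr, one_smul, mul_inv, mul_comm s⁻¹] using h

theorem minor_rdet_eq_cdet_general {F : Type*} [Field F] (r s : F) (hr : r ≠ 0)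
    {R : Type*} [Ring R] [Algebra F R] {n : ℕ} (a : Fin n → Fin n → R)
    (ha : IsQSemigroup r s a) (t : ℕ) (I J : Fin t → Fin n)
    (hI : StrictMono I) (hJ : StrictMono J) :
    rdet r (fun p q => a (I p) (J q)) = cdet s (fun p q => a (I p) (J q)) := by
  have hterm : ∀ σ : Perm (Fin t), (List.ofFn fun p => a (I p) (J (σ p))).prod =
      (r * s)⁻¹ ^ inversions σ • (List.ofFn fun p => a (I (σ⁻¹ p)) (J p)).prod :=
    fun σ => by
      simpa only [Perm.coe_inv, apply_symm_apply] using prod_ofFn_eq_pow_inversions_smul _ σ _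
        fun _ _ hpq hσ => ha.mul_eq_smul_mul_of_lt hr (hI hpq) (hJ hσ)
  have hcoeff : -r * (r * s)⁻¹ = (-s)⁻¹ := by
    rw [mul_inv, neg_mul, mul_inv_cancel_left₀ hr, inv_neg]
  refine Fintype.sum_equiv (Equiv.inv _) _ _ fun σ => ?_
  rw [hterm, smul_smul, ← mul_pow, hcoeff, Equiv.inv_apply, inversions_inv, zpow_neg,
    zpow_natCast, inv_pow]

/-- In `𝒜_{r,s}(n)`, for increasing row indices `i_1 < ⋯ < i_t` and
column indices `j_1 < ⋯ < j_t`, the quantum row-minor equals the quantum column-minor. -/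
theorem minor_rdet_eq_cdet {F : Type*} [Field F] (r s : F) (hr : r ≠ 0) (hs : s ≠ 0)
    {R : Type*} [Ring R] [Algebra F R] {n : ℕ} (a : Fin n → Fin n → R)
    (ha : IsQSemigroup r s a) (t : ℕ) (I J : Fin t → Fin n)
    (hI : StrictMono I) (hJ : StrictMono J) :
    rdet r (fun p q => a (I p) (J q)) = cdet s (fun p q => a (I p) (J q)) :=
  minor_rdet_eq_cdet_general r s hr a ha t I J hI hJ
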